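/- (In-weight criterion excluding the discovering vertex, Lemma 5 of the paper.) Assume that every u ∈ F admits a path from v0 to u, all of whose vertices lie in F, whose cost equals cost u. Let k ∉ F, and let z ∈ F be a vertex with E z k (the vertex from which k was discovered). If D k ≤ (⨅ {D y : y ∉ F}) + (⨅ {w v k : E v k ∧ v ≠ z}), where the second infimum is over all in-edges of k other than the one from z, then D k = cost k. -/

import Mathlib

open scoped ENNReal

variable {V : Type*}

/-- `IsPath E v0 x p` means `p` is a finite sequence of vertices starting at `v0`,
ending at `x`, with consecutive vertices joined by edges of `E`. -/
def IsPath (E : V → V → Prop) (v0 x : V) (p : List V) : Prop :=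
  p.Chain' E ∧ p.head? = some v0 ∧ p.getLast? = some x

/-- The cost of a path: the sum of the weights of its consecutive edges. -/
noncomputable def pathCost (w : V → V → ℝ≥0∞) (p : List V) : ℝ≥0∞ :=
  ((p.zip p.tail).map fun q => w q.1 q.2).sum

/-- `cost E w v0 x` : the infimum of the costs of all paths from `v0` to `x`
(`∞` if `x` is unreachable from `v0`). -/
noncomputable def cost (E : V → V → Prop) (w : V → V → ℝ≥0∞) (v0 x : V) : ℝ≥0∞ :=
  ⨅ p : {p : List V // IsPath E v0 x p}, pathCost w p.1

/-- An `F`-path from `v0` to `x` : a path all of whose vertices other than the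
final vertex `x` lie in `F`. `Dfun E w v0 F x` is the infimum of the costs of
`F`-paths from `v0` to `x` (`∞` if no `F`-path to `x` exists). -/
noncomputable def Dfun (E : V → V → Prop) (w : V → V → ℝ≥0∞) (v0 : V) (F : Set V)
    (x : V) : ℝ≥0∞ :=
  ⨅ p : {p : List V // IsPath E v0 x p ∧ ∀ v ∈ p.dropLast, v ∈ F}, pathCost w p.1

/-!
Split a path from `v0` to `k` as `t ++ [u] ++ [k]`. If `u = z`, replacing the prefix `t ++ [u]` by an
optimal path to `z` inside `F` gives an `F`-path to `k` that is no more expensive. If `u ≠ z` and the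
prefix stays in `F`, the path is itself an `F`-path. Otherwise the prefix leaves `F`; at its first
vertex `y ∉ F` it has already paid at least `D y`, and its last edge costs at least the smallest
in-weight of `k` from a vertex other than `z`, so the hypothesis bounds `D k` by its cost.
-/

theorem List.exists_isPrefix_first_notMem {α : Type*} (s : Set α) :
    ∀ p : List α, (∃ v ∈ p, v ∉ s) → ∃ q y, q ++ [y] <+: p ∧ y ∉ s ∧ ∀ v ∈ q, v ∈ s
  | [], ⟨_, hv, _⟩ => absurd hv List.not_mem_nil
  | a :: p, hout => by
    by_cases ha : a ∈ s
    · have hout' : ∃ v ∈ p, v ∉ s := by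
        obtain ⟨v, hv, hvs⟩ := hout
        exact ⟨v, (List.mem_cons.1 hv).resolve_left (by rintro rfl; exact hvs ha), hvs⟩
      obtain ⟨q, y, hpre, hy, hq⟩ := exists_isPrefix_first_notMem s p hout'
      exact ⟨a :: q, y, List.cons_prefix_cons.2 ⟨rfl, hpre⟩, hy, by simpa [ha] using hq⟩
    · exact ⟨[], a, by simp, ha, by simp⟩

section PathCost

variable (w : V → V → ℝ≥0∞)

theorem pathCost_cons_cons (a b : V) (l : List V) :
    pathCost w (a :: b :: l) = w a b + pathCost w (b :: l) := rfl

theorem pathCost_append_singleton : ∀ (l : List V) (a b : V),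
    pathCost w (l ++ [a] ++ [b]) = pathCost w (l ++ [a]) + w a b
  | [], a, b => by simp [pathCost]
  | [x], a, b => by simp [pathCost]
  | x :: y :: l, a, b => by
    have ih := pathCost_append_singleton (y :: l) a b
    simp only [List.cons_append, pathCost_cons_cons] at ih ⊢
    rw [ih, add_assoc]

theorem pathCost_le_append : ∀ l r : List V, pathCost w l ≤ pathCost w (l ++ r)
  | [], r => by simp [pathCost]
  | [x], r => by simp [pathCost]
  | x :: y :: l, r => by
    simp only [List.cons_append, pathCost_cons_cons]
    exact add_le_add_right (pathCost_le_append (y :: l) r) _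

theorem pathCost_mono_of_isPrefix {l₁ l₂ : List V} (h : l₁ <+: l₂) :
    pathCost w l₁ ≤ pathCost w l₂ := by
  obtain ⟨r, rfl⟩ := h
  exact pathCost_le_append w l₁ r

end PathCost

namespace IsPath

variable {E : V → V → Prop} {v0 x u y : V} {p q : List V}

theorem exists_eq_append (hp : IsPath E v0 x p) : ∃ t, p = t ++ [x] :=
  List.getLast?_eq_some_iff.1 hp.2.2

theorem append_singleton (hp : IsPath E v0 u p) (h : E u x) : IsPath E v0 x (p ++ [x]) :=
  ⟨hp.1.append (List.isChain_singleton x) (by simp [hp.2.2, h]),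
    by simp [List.head?_append, hp.2.1], by simp⟩

theorem of_append_singleton_isPrefix (hp : IsPath E v0 x p) (hq : q ++ [y] <+: p) :
    IsPath E v0 y (q ++ [y]) := by
  obtain ⟨r, rfl⟩ := hq
  exact ⟨(List.isChain_append.1 hp.1).1, by simpa [List.head?_append] using hp.2.1, by simp⟩

theorem exists_eq_append_append (hp : IsPath E v0 x p) (hx : x ≠ v0) :
    ∃ t u, IsPath E v0 u (t ++ [u]) ∧ E u x ∧ p = t ++ [u] ++ [x] := by
  obtain ⟨s, rfl⟩ := hp.exists_eq_append
  obtain rfl | ⟨t, u, rfl⟩ := List.eq_nil_or_concat' s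
  · exact absurd (by simpa using hp.2.1) hx
  refine ⟨t, u, hp.of_append_singleton_isPrefix (List.prefix_append _ _), ?_, rfl⟩
  exact (List.isChain_append.1 hp.1).2.2 u (by simp) x (by simp)

end IsPath

section Infima

variable {E : V → V → Prop} {w : V → V → ℝ≥0∞} {v0 x u : V} {F : Set V} {p : List V}

theorem cost_le_pathCost (hp : IsPath E v0 x p) : cost E w v0 x ≤ pathCost w p :=
  iInf_le (fun q : {q // IsPath E v0 x q} => pathCost w q.1) ⟨p, hp⟩

theorem Dfun_le_pathCost (hp : IsPath E v0 x p) (hF : ∀ v ∈ p.dropLast, v ∈ F) :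
    Dfun E w v0 F x ≤ pathCost w p :=
  iInf_le (fun q : {q // IsPath E v0 x q ∧ ∀ v ∈ q.dropLast, v ∈ F} => pathCost w q.1) ⟨p, hp, hF⟩

theorem cost_le_Dfun : cost E w v0 x ≤ Dfun E w v0 F x :=
  le_iInf fun q => cost_le_pathCost q.2.1

theorem Dfun_le_pathCost_add {t : List V} (ht : IsPath E v0 u (t ++ [u]))
    (htF : ∀ v ∈ t ++ [u], v ∈ F) (h : E u x) :
    Dfun E w v0 F x ≤ pathCost w (t ++ [u]) + w u x := by
  rw [← pathCost_append_singleton]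
  exact Dfun_le_pathCost (ht.append_singleton h) (by simpa using htF)

theorem exists_notMem_Dfun_le_pathCost (hp : IsPath E v0 x p) (hout : ∃ v ∈ p, v ∉ F) :
    ∃ y ∉ F, Dfun E w v0 F y ≤ pathCost w p := by
  obtain ⟨q, y, hpre, hy, hqF⟩ := List.exists_isPrefix_first_notMem F p hout
  exact ⟨y, hy, (Dfun_le_pathCost (hp.of_append_singleton_isPrefix hpre) (by simpa using hqF)).trans
    (pathCost_mono_of_isPrefix w hpre)⟩

end Infima

theorem in_weight_criterion_general (E : V → V → Prop) (w : V → V → ℝ≥0∞)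
    (v0 : V) (F : Set V) (hv0 : v0 ∈ F)
    (hF : ∀ u ∈ F, ∃ p : List V, IsPath E v0 u p ∧ (∀ v ∈ p, v ∈ F) ∧
      pathCost w p = cost E w v0 u)
    (k : V) (hk : k ∉ F) (z : V) (hz : z ∈ F)
    (hD : Dfun E w v0 F k ≤
      (⨅ y : {y : V // y ∉ F}, Dfun E w v0 F y.1) +
      (⨅ v : {v : V // E v k ∧ v ≠ z}, w v.1 k)) :
    Dfun E w v0 F k = cost E w v0 k := by
  refine le_antisymm (le_iInf fun ⟨p, hp⟩ => ?_) cost_le_Dfun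
  obtain ⟨t, u, ht, hut, rfl⟩ := hp.exists_eq_append_append fun h => hk (h ▸ hv0)
  rw [pathCost_append_singleton]
  by_cases huz : u = z
  · subst huz
    obtain ⟨q, hq, hqF, hqc⟩ := hF u hz
    obtain ⟨s, rfl⟩ := hq.exists_eq_append
    calc Dfun E w v0 F k ≤ pathCost w (s ++ [u]) + w u k := Dfun_le_pathCost_add hq hqF hut
      _ ≤ pathCost w (t ++ [u]) + w u k := by
        rw [hqc]
        gcongr
        exact cost_le_pathCost ht
  by_cases htF : ∀ v ∈ t ++ [u], v ∈ F
  · exact Dfun_le_pathCost_add ht htF hut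
  push Not at htF
  obtain ⟨y, hy, hDy⟩ := exists_notMem_Dfun_le_pathCost (w := w) ht htF
  exact hD.trans (add_le_add (iInf_le_of_le ⟨y, hy⟩ hDy)
    (iInf_le (fun v : {v // E v k ∧ v ≠ z} => w v.1 k) ⟨u, hut, huz⟩))

/-- In-weight criterion excluding the discovering vertex (Lemma 5): with the second
infimum over all in-edges of `k` other than the one from `z ∈ F`. -/
theorem in_weight_criterion [Fintype V] (E : V → V → Prop) (w : V → V → ℝ≥0∞)
    (hpos : ∀ u v, E u v → 0 < w u v) (hfin : ∀ u v, E u v → w u v < ⊤)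
    (v0 : V) (F : Set V) (hv0 : v0 ∈ F)
    (hF : ∀ u ∈ F, ∃ p : List V, IsPath E v0 u p ∧ (∀ v ∈ p, v ∈ F) ∧
      pathCost w p = cost E w v0 u)
    (k : V) (hk : k ∉ F) (z : V) (hz : z ∈ F) (hzk : E z k)
    (hD : Dfun E w v0 F k ≤
      (⨅ y : {y : V // y ∉ F}, Dfun E w v0 F y.1) +
      (⨅ v : {v : V // E v k ∧ v ≠ z}, w v.1 k)) :
    Dfun E w v0 F k = cost E w v0 k :=
  in_weight_criterion_general E w v0 F hv0 hF k hk z hz hD
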